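/- For any model M of the theory of substitutions 𝕊, the data F(M) — with objects of level n the elements of M_{(ctx,n)}, morphisms given by tuples of terms satisfying the Hom predicate, composition defined by substitution, identities given by tuples of variables, ft and the projections p_A as given, pullback types A[f] = subst_{ty}(B, A, f), and connecting morphisms q(f, A) — forms a contextual category; in particular the canonical square with vertices A[f], A, B, ft_k(A) is Cartesian. -/

import Mathlib

universe u

/-- Iterated `ft`, lowering a context of length `k` to one of length `m ≤ k`. -/
def ftLe' {Ctx : ℕ → Type u} (ft : ∀ n, Ctx (n + 1) → Ctx n) :
    ∀ {k m : ℕ}, m ≤ k → Ctx k → Ctx m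
  | 0, 0, _, A => A
  | k + 1, m, h, A =>
    if hm : m = k + 1 then cast (congrArg Ctx hm.symm) A
    else ftLe' ft (by omega) (ft k A)

/-- A model of the partial Horn theory of substitutions `𝕊`: sorts `(ctx, n)` and `(tm, n)`
(with `(ty, n) := (ctx, n+1)`), operations `*`, `ft`, `ty`, variables `v_{n,i}` and full
substitution `subst_{p,n,k}` (a partial operation, represented using `Part`), subject to the
axioms of `𝕊`. -/
structure SubModel : Type (u + 1) where
  Ctx : ℕ → Type u
  Tm : ℕ → Type u
  star : Ctx 0
  ctx_zero_unique : ∀ A : Ctx 0, A = star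
  ft : ∀ n, Ctx (n + 1) → Ctx n
  ty : ∀ n, Tm n → Ctx (n + 1)
  v : ∀ n i, i < n → Ctx n → Tm n
  substTy : ∀ n k, Ctx n → Ctx (k + 1) → (Fin k → Tm n) → Part (Ctx (n + 1))
  substTm : ∀ n k, Ctx n → Tm k → (Fin k → Tm n) → Part (Tm n)
  -- the axioms are stated below, after the auxiliary definitions
  ax_def_substTy : ∀ n k (B : Ctx n) (A : Ctx (k + 1)) (a : Fin k → Tm n),
    (substTy n k B A a).Dom ↔
      ∀ i : Fin k, ty n (a i) ∈ substTy n i B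
        (ftLe' ft (Nat.succ_le_of_lt i.isLt) (ft k A))
        (fun j => a (Fin.castLE (le_of_lt i.isLt) j))
  ax_def_substTm : ∀ n k (B : Ctx n) (b : Tm k) (a : Fin k → Tm n),
    (substTm n k B b a).Dom ↔
      ∀ i : Fin k, ty n (a i) ∈ substTy n i B
        (ftLe' ft (Nat.succ_le_of_lt i.isLt) (ft k (ty k b)))
        (fun j => a (Fin.castLE (le_of_lt i.isLt) j))
  ax_type_var : ∀ n i (h : i < n) (A : Ctx n),
    ty n (v n i h A) ∈ substTy n (n - i - 1) A
      (ftLe' ft (by omega) A)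
      (fun j => v n (n - 1 - j) (by omega) A)
  ax_type_substTy : ∀ n k B A a C, C ∈ substTy n k B A a → ft n C = B
  ax_type_substTm : ∀ n k (B : Ctx n) (b : Tm k) (a : Fin k → Tm n),
    (substTm n k B b a).map (ty n) = substTy n k B (ty k b) a
  ax_subst_var_ty : ∀ n (A : Ctx (n + 1)),
    substTy n n (ft n A) A (fun j => v n (n - 1 - j) (by omega) (ft n A)) = Part.some A
  ax_subst_var_tm : ∀ n (b : Tm n),
    substTm n n (ft n (ty n b)) b
      (fun j => v n (n - 1 - j) (by omega) (ft n (ty n b))) = Part.some b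
  ax_var_subst : ∀ n k (B : Ctx n) (A : Ctx k) (a : Fin k → Tm n)
    (_ : ∀ i : Fin k, ty n (a i) ∈ substTy n i B
        (ftLe' ft (Nat.succ_le_of_lt i.isLt) A)
        (fun j => a (Fin.castLE (le_of_lt i.isLt) j)))
    (i : ℕ) (h : i < k),
    substTm n k B (v k i h A) a = Part.some (a ⟨k - i - 1, by omega⟩)
  ax_subst_subst_tm : ∀ n k m (C : Ctx n) (B : Ctx k) (b : Fin k → Tm n)
    (a : Fin m → Tm k) (t : Tm m)
    (_ : ∀ i : Fin k, ty n (b i) ∈ substTy n i C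
        (ftLe' ft (Nat.succ_le_of_lt i.isLt) B)
        (fun j => b (Fin.castLE (le_of_lt i.isLt) j)))
    (_ : ∀ i : Fin m, ty k (a i) ∈ substTy k i B
        (ftLe' ft (Nat.succ_le_of_lt i.isLt) (ft m (ty m t)))
        (fun j => a (Fin.castLE (le_of_lt i.isLt) j)))
    (s : Tm k) (_ : s ∈ substTm k m B t a)
    (c : Fin m → Tm n) (_ : ∀ i, c i ∈ substTm n k C (a i) b),
    substTm n k C s b = substTm n m C t c
  ax_subst_subst_ty : ∀ n k m (C : Ctx n) (B : Ctx k) (b : Fin k → Tm n)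
    (a : Fin m → Tm k) (A : Ctx (m + 1))
    (_ : ∀ i : Fin k, ty n (b i) ∈ substTy n i C
        (ftLe' ft (Nat.succ_le_of_lt i.isLt) B)
        (fun j => b (Fin.castLE (le_of_lt i.isLt) j)))
    (_ : ∀ i : Fin m, ty k (a i) ∈ substTy k i B
        (ftLe' ft (Nat.succ_le_of_lt i.isLt) (ft m A))
        (fun j => a (Fin.castLE (le_of_lt i.isLt) j)))
    (A' : Ctx (k + 1)) (_ : A' ∈ substTy k m B A a)
    (c : Fin m → Tm n) (_ : ∀ i, c i ∈ substTm n k C (a i) b),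
    substTy n k C A' b = substTy n m C A c


namespace SubModel

variable (M : SubModel.{u})

/-- The `Hom` predicate of `𝕊`: the tuple `(a_1, …, a_k)` is a morphism `B → A` of the
associated category, i.e. each `a_i` has the type obtained by substituting `a_1, …, a_{i-1}`
into the `i`-th component of `A`. -/
def Hom (n k : ℕ) (B : M.Ctx n) (A : M.Ctx k) (a : Fin k → M.Tm n) : Prop :=
  ∀ i : Fin k, M.ty n (a i) ∈ M.substTy n i B
    (ftLe' M.ft (Nat.succ_le_of_lt i.isLt) A)
    (fun j => a (Fin.castLE (le_of_lt i.isLt) j))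

/-- The identity morphism `id_A = (v_{n,n-1}(A), …, v_{n,0}(A))`. -/
def idTuple {n : ℕ} (A : M.Ctx n) : Fin n → M.Tm n :=
  fun j => M.v n (n - 1 - j) (by omega) A

/-- The projection `p_A = (v_{n+1,n}(A), …, v_{n+1,1}(A)) : A → ft(A)`. -/
def pTuple {n : ℕ} (A : M.Ctx (n + 1)) : Fin n → M.Tm (n + 1) :=
  fun j => M.v (n + 1) (n - j) (by omega) A

/-- `f : ft(A) → A` is a section of the projection `p_A`: it is a morphism and
`p_A ∘ f = id_{ft(A)}` (composition is componentwise substitution). -/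
def IsSection {k : ℕ} (A : M.Ctx (k + 1)) (f : Fin (k + 1) → M.Tm k) : Prop :=
  M.Hom k (k + 1) (M.ft k A) A f ∧
  ∀ j : Fin k, M.substTm k (k + 1) (M.ft k A) (M.pTuple A j) f =
    Part.some (M.idTuple (M.ft k A) j)

/-- The map `φ(a) = (v_{k,k-1}(ft A), …, v_{k,0}(ft A), a)`. -/
def phi {k : ℕ} (A : M.Ctx (k + 1)) (a : M.Tm k) : Fin (k + 1) → M.Tm k :=
  fun j => if h : (j : ℕ) < k then M.v k (k - 1 - j) (by omega) (M.ft k A) else a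

end SubModel




/-- A contextual category: a graded category with a terminal object of level `0`, maps
`ft`, projections `p_A`, and a strictly functorial choice of pullbacks `f*(A) = pb A B f`
with connecting maps `q(f, A)` along the projections. -/
structure CtxCat : Type (u + 1) where
  Ob : ℕ → Type u
  Hom : (Σ n, Ob n) → (Σ n, Ob n) → Type u
  id : ∀ X, Hom X X
  comp : ∀ {X Y Z}, Hom X Y → Hom Y Z → Hom X Z
  id_comp : ∀ {X Y} (f : Hom X Y), comp (id X) f = f
  comp_id : ∀ {X Y} (f : Hom X Y), comp f (id Y) = f
  assoc : ∀ {W X Y Z} (f : Hom W X) (g : Hom X Y) (h : Hom Y Z),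
    comp (comp f g) h = comp f (comp g h)
  pt : Ob 0
  pt_unique : ∀ A : Ob 0, A = pt
  toPt : ∀ X, Hom X ⟨0, pt⟩
  toPt_unique : ∀ X (f : Hom X ⟨0, pt⟩), f = toPt X
  ft : ∀ {n}, Ob (n + 1) → Ob n
  p : ∀ {n} (A : Ob (n + 1)), Hom ⟨n + 1, A⟩ ⟨n, ft A⟩
  pb : ∀ {n k} (A : Ob (n + 1)) (B : Ob k), Hom ⟨k, B⟩ ⟨n, ft A⟩ → Ob (k + 1)
  pb_ft : ∀ {n k} (A : Ob (n + 1)) (B : Ob k) (f : Hom ⟨k, B⟩ ⟨n, ft A⟩),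
    ft (pb A B f) = B
  q : ∀ {n k} (A : Ob (n + 1)) (B : Ob k) (f : Hom ⟨k, B⟩ ⟨n, ft A⟩),
    Hom ⟨k + 1, pb A B f⟩ ⟨n + 1, A⟩
  square : ∀ {n k} (A : Ob (n + 1)) (B : Ob k) (f : Hom ⟨k, B⟩ ⟨n, ft A⟩),
    comp (q A B f) (p A) =
      comp (cast (by rw [pb_ft A B f]) (p (pb A B f)) :
        Hom ⟨k + 1, pb A B f⟩ ⟨k, B⟩) f
  cartesian : ∀ {n k} (A : Ob (n + 1)) (B : Ob k) (f : Hom ⟨k, B⟩ ⟨n, ft A⟩)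
    {X : Σ n, Ob n} (g : Hom X ⟨n + 1, A⟩) (h : Hom X ⟨k, B⟩),
    comp g (p A) = comp h f →
    ∃! u : Hom X ⟨k + 1, pb A B f⟩, comp u (q A B f) = g ∧
      comp u (cast (by rw [pb_ft A B f]) (p (pb A B f)) :
        Hom ⟨k + 1, pb A B f⟩ ⟨k, B⟩) = h
  pb_id : ∀ {n} (A : Ob (n + 1)), pb A (ft A) (id ⟨n, ft A⟩) = A
  q_id : ∀ {n} (A : Ob (n + 1)), HEq (q A (ft A) (id ⟨n, ft A⟩)) (id ⟨n + 1, A⟩)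
  pb_comp : ∀ {n k m} (A : Ob (n + 1)) (B : Ob k) (f : Hom ⟨k, B⟩ ⟨n, ft A⟩)
    (C : Ob m) (g : Hom ⟨m, C⟩ ⟨k, B⟩),
    pb A C (comp g f) =
      pb (pb A B f) C (cast (by rw [pb_ft A B f]) g :
        Hom ⟨m, C⟩ ⟨k, ft (pb A B f)⟩)
  q_comp : ∀ {n k m} (A : Ob (n + 1)) (B : Ob k) (f : Hom ⟨k, B⟩ ⟨n, ft A⟩)
    (C : Ob m) (g : Hom ⟨m, C⟩ ⟨k, B⟩),
    HEq (q A C (comp g f))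
      (comp (q (pb A B f) C (cast (by rw [pb_ft A B f]) g)) (q A B f))

/-- A correspondence between a model `M` of the theory of substitutions `𝕊` and a
contextual category `C`, exhibiting `C` as the contextual category `F(M)` associated to `M`:
objects of level `n` are the contexts of length `n`, morphisms are the compatible tuples of
terms, composition is componentwise substitution, identities are the tuples of variables,
`ft` and the projections are as given, pullbacks `A[f]` are given by `subst_ty`, and the
connecting maps `q(f, A)` are given by weakened tuples together with the top variable. -/
structure SubCtxCorrespondence (M : SubModel.{u}) (C : CtxCat.{u}) where
  obEquiv : ∀ n, M.Ctx n ≃ C.Ob n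
  ft_compat : ∀ n (A : M.Ctx (n + 1)),
    C.ft (obEquiv (n + 1) A) = obEquiv n (M.ft n A)
  homEquiv : ∀ n k (B : M.Ctx n) (A : M.Ctx k),
    { a : Fin k → M.Tm n // M.Hom n k B A a } ≃
      C.Hom ⟨n, obEquiv n B⟩ ⟨k, obEquiv k A⟩
  id_compat : ∀ n (A : M.Ctx n) (h : M.Hom n n A A (M.idTuple A)),
    homEquiv n n A A ⟨M.idTuple A, h⟩ = C.id ⟨n, obEquiv n A⟩
  comp_compat : ∀ {n k m} (B : M.Ctx n) (A : M.Ctx k) (A' : M.Ctx m)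
    (f : { a // M.Hom n k B A a }) (g : { c // M.Hom k m A A' c })
    (h : { c // M.Hom n m B A' c }),
    (∀ i, h.1 i ∈ M.substTm n k B (g.1 i) f.1) →
    C.comp (homEquiv n k B A f) (homEquiv k m A A' g) = homEquiv n m B A' h
  p_compat : ∀ n (A : M.Ctx (n + 1)) (h : M.Hom (n + 1) n A (M.ft n A) (M.pTuple A)),
    homEquiv (n + 1) n A (M.ft n A) ⟨M.pTuple A, h⟩ =
      cast (by rw [ft_compat n A]) (C.p (obEquiv (n + 1) A))
  pb_compat : ∀ n k (B : M.Ctx n) (A : M.Ctx (k + 1)) (a : Fin k → M.Tm n)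
    (h : M.Hom n k B (M.ft k A) a) (T : M.Ctx (n + 1)) (_ : T ∈ M.substTy n k B A a),
    obEquiv (n + 1) T =
      C.pb (obEquiv (k + 1) A) (obEquiv n B)
        (cast (by rw [ft_compat k A]) (homEquiv n k B (M.ft k A) ⟨a, h⟩))
  q_compat : ∀ n k (B : M.Ctx n) (A : M.Ctx (k + 1)) (a : Fin k → M.Tm n)
    (h : M.Hom n k B (M.ft k A) a) (T : M.Ctx (n + 1)) (hT : T ∈ M.substTy n k B A a)
    (qf : Fin (k + 1) → M.Tm (n + 1)) (hq : M.Hom (n + 1) (k + 1) T A qf),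
    (∀ i : Fin k, qf i.castSucc ∈ M.substTm (n + 1) n T (a i) (M.pTuple T)) →
    qf (Fin.last k) = M.v (n + 1) 0 (by omega) T →
    homEquiv (n + 1) (k + 1) T A ⟨qf, hq⟩ =
      cast (by rw [pb_compat n k B A a h T hT])
        (C.q (obEquiv (k + 1) A) (obEquiv n B)
          (cast (by try rw [ft_compat k A]) (homEquiv n k B (M.ft k A) ⟨a, h⟩)))


/-!
The contexts of `M` and the `Hom`-tuples between them form a category in which composition is
substitution, so its laws are the unit and associativity axioms of `𝕊`. A tuple into a context
`A` of length `k + 1` is a morphism exactly when its first `k` components form a morphism into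
`ft A` and its last component has the type `A` substituted by them (`hom_succ_iff`). Hence
`q(f, A)`, the tuple `p_{A[f]} ≫ f` extended by the top variable, is a morphism, and a cone
`(g, h)` over `(p_A, f)` factors through `A[f]` exactly via `h` extended by the last component of
`g`. Strict functoriality of `A[f]` and `q(f, A)` again reduces to associativity of substitution.
-/

section FtLe

variable {Ctx : ℕ → Type u} (ft : ∀ n, Ctx (n + 1) → Ctx n)

lemma ftLe'_self : ∀ {k : ℕ} (h : k ≤ k) (A : Ctx k), ftLe' ft h A = A
  | 0, _, _ => rfl
  | _ + 1, _, _ => by simp [ftLe']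

lemma ftLe'_succ {k m : ℕ} (h : m ≤ k) (h' : m ≤ k + 1) (A : Ctx (k + 1)) :
    ftLe' ft h' A = ftLe' ft h (ft k A) := by
  simp [ftLe', show m ≠ k + 1 by omega]

lemma ftLe'_ftLe' : ∀ {k m l : ℕ} (h₁ : l ≤ m) (h₂ : m ≤ k) (h₃ : l ≤ k) (A : Ctx k),
    ftLe' ft h₁ (ftLe' ft h₂ A) = ftLe' ft h₃ A
  | 0, 0, 0, _, _, _, _ => rfl
  | k + 1, m, l, h₁, h₂, h₃, A => by
    by_cases hm : m = k + 1
    · subst hm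
      rw [ftLe'_self]
    · rw [ftLe'_succ ft (by omega : m ≤ k) h₂, ftLe'_succ ft (by omega : l ≤ k) h₃,
        ftLe'_ftLe' h₁]

lemma ft_ftLe' {k m : ℕ} (h : m + 1 ≤ k) (h' : m ≤ k) (A : Ctx k) :
    ft m (ftLe' ft h A) = ftLe' ft h' A := by
  rw [← ftLe'_ftLe' ft (Nat.le_succ m) h h' A, ftLe'_succ ft le_rfl, ftLe'_self]

end FtLe


namespace SubModel

variable {M : SubModel.{u}}

lemma substTy_congr {n k k' : ℕ} (e : k = k') (B : M.Ctx n) {A : M.Ctx (k + 1)}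
    {A' : M.Ctx (k' + 1)} (hA : HEq A A') {a : Fin k → M.Tm n} {a' : Fin k' → M.Tm n}
    (ha : ∀ j, a j = a' (Fin.cast e j)) :
    M.substTy n k B A a = M.substTy n k' B A' a' := by
  subst e hA
  rw [funext ha]
  rfl

lemma Hom.ft_ty {n k : ℕ} {B : M.Ctx n} {A : M.Ctx k} {a : Fin k → M.Tm n}
    (h : M.Hom n k B A a) (i : Fin k) : M.ft n (M.ty n (a i)) = B :=
  M.ax_type_substTy _ _ _ _ _ _ (h i)

lemma Hom.restrict {n k m : ℕ} {B : M.Ctx n} {A : M.Ctx k} {a : Fin k → M.Tm n}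
    (h : M.Hom n k B A a) (hm : m ≤ k) :
    M.Hom n m B (ftLe' M.ft hm A) (fun j => a (Fin.castLE hm j)) := by
  intro i
  rw [ftLe'_ftLe']
  exact h (Fin.castLE hm i)

lemma hom_succ_iff {n k : ℕ} {B : M.Ctx n} {A : M.Ctx (k + 1)} {a : Fin (k + 1) → M.Tm n} :
    M.Hom n (k + 1) B A a ↔
      M.Hom n k B (M.ft k A) (Fin.init a) ∧
        M.ty n (a (Fin.last k)) ∈ M.substTy n k B A (Fin.init a) := by
  constructor
  · intro h
    refine ⟨?_, ?_⟩
    · have := h.restrict (Nat.le_succ k)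
      rwa [ftLe'_succ M.ft le_rfl, ftLe'_self] at this
    · have := h (Fin.last k)
      rwa [ftLe'_self] at this
  · rintro ⟨hinit, hlast⟩ i
    induction i using Fin.lastCases with
    | last => rw [ftLe'_self]; exact hlast
    | cast i =>
      rw [ftLe'_succ M.ft (Nat.succ_le_of_lt i.isLt)]
      exact hinit i

lemma hom_idTuple {n : ℕ} (A : M.Ctx n) : M.Hom n n A A (M.idTuple A) := by
  intro i
  have h := M.ax_type_var n (n - 1 - i) (by omega) A
  rwa [substTy_congr (by omega : n - (n - 1 - i) - 1 = i) A
    (A' := ftLe' M.ft (Nat.succ_le_of_lt i.isLt) A)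
    (a := fun j => M.v n (n - 1 - j) (by omega) A)
    (a' := fun j => M.idTuple A (Fin.castLE (le_of_lt i.isLt) j))
    (by congr 1 <;> first | omega | exact proof_irrel_heq _ _) (fun _ => rfl)] at h

lemma hom_pTuple {n : ℕ} (A : M.Ctx (n + 1)) : M.Hom (n + 1) n A (M.ft n A) (M.pTuple A) :=
  (hom_succ_iff.mp (hom_idTuple A)).1

lemma idTuple_last {n : ℕ} (A : M.Ctx (n + 1)) :
    M.idTuple A (Fin.last n) = M.v (n + 1) 0 (by omega) A := by
  simp [idTuple]

lemma ty_v_zero_mem {n : ℕ} (A : M.Ctx (n + 1)) :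
    M.ty (n + 1) (M.v (n + 1) 0 (by omega) A) ∈ M.substTy (n + 1) n A A (M.pTuple A) := by
  rw [← idTuple_last]
  exact (hom_succ_iff.mp (hom_idTuple A)).2

lemma substTm_idTuple {n k : ℕ} {B : M.Ctx n} {A : M.Ctx k} {a : Fin k → M.Tm n}
    (h : M.Hom n k B A a) (j : Fin k) :
    M.substTm n k B (M.idTuple A j) a = Part.some (a j) := by
  rw [idTuple, M.ax_var_subst n k B A a h]
  congr 2
  ext
  simp only
  omega

variable (M) in
def Mor {n k : ℕ} (B : M.Ctx n) (A : M.Ctx k) : Type u :=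
  { a : Fin k → M.Tm n // M.Hom n k B A a }

namespace Mor

variable {n k m l : ℕ} {B : M.Ctx n} {A : M.Ctx k} {A' : M.Ctx m}

@[ext]
lemma ext {f g : M.Mor B A} (h : f.1 = g.1) : f = g := Subtype.ext h

lemma substTm_dom (f : M.Mor B A) {t : M.Tm k} (ht : M.ft k (M.ty k t) = A) :
    (M.substTm n k B t f.1).Dom := by
  rw [M.ax_def_substTm, ht]
  exact f.2

/-- Diagrammatic order: `f.comp g` is `g ∘ f`, substituting `f` into each component of `g`. -/
def compTuple (f : M.Mor B A) (g : M.Mor A A') : Fin m → M.Tm n :=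
  fun i => (M.substTm n k B (g.1 i) f.1).get (f.substTm_dom (g.2.ft_ty i))

lemma compTuple_mem (f : M.Mor B A) (g : M.Mor A A') (i : Fin m) :
    compTuple f g i ∈ M.substTm n k B (g.1 i) f.1 :=
  Part.get_mem _

lemma hom_compTuple (f : M.Mor B A) (g : M.Mor A A') : M.Hom n m B A' (compTuple f g) := by
  intro i
  have hty : M.ty n (compTuple f g i) ∈ M.substTy n k B (M.ty k (g.1 i)) f.1 := by
    rw [← M.ax_type_substTm]
    exact Part.mem_map _ (compTuple_mem f g i)
  rwa [M.ax_subst_subst_ty n k i B A f.1 (fun j => g.1 (Fin.castLE i.isLt.le j))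
    (ftLe' M.ft (Nat.succ_le_of_lt i.isLt) A') f.2
    (by rw [ft_ftLe' M.ft _ i.isLt.le]; exact g.2.restrict i.isLt.le)
    _ (g.2 i) _ (fun j => compTuple_mem f g _)] at hty

def comp (f : M.Mor B A) (g : M.Mor A A') : M.Mor B A' :=
  ⟨compTuple f g, hom_compTuple f g⟩

lemma comp_apply_mem (f : M.Mor B A) (g : M.Mor A A') (i : Fin m) :
    (f.comp g).1 i ∈ M.substTm n k B (g.1 i) f.1 :=
  compTuple_mem f g i

lemma comp_val_eq_of_mem {f : M.Mor B A} {g : M.Mor A A'} {c : Fin m → M.Tm n}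
    (h : ∀ i, c i ∈ M.substTm n k B (g.1 i) f.1) : (f.comp g).1 = c :=
  funext fun i => Part.mem_unique (comp_apply_mem f g i) (h i)

lemma comp_val_congr_right (f : M.Mor B A) {A'' : M.Ctx m} (g : M.Mor A A')
    (g' : M.Mor A A'') (h : g.1 = g'.1) : (f.comp g).1 = (f.comp g').1 :=
  comp_val_eq_of_mem fun i => h ▸ comp_apply_mem f g' i

variable (B) in
def id : M.Mor B B := ⟨M.idTuple B, hom_idTuple B⟩

lemma id_comp (f : M.Mor B A) : (id B).comp f = f := by
  ext1
  refine comp_val_eq_of_mem fun i => ?_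
  have h := M.ax_subst_var_tm n (f.1 i)
  rw [f.2.ft_ty i] at h
  exact Part.eq_some_iff.mp h

lemma comp_id (f : M.Mor B A) : f.comp (id A) = f :=
  ext <| comp_val_eq_of_mem fun i => by
    rw [id, substTm_idTuple f.2]
    exact Part.mem_some _

lemma comp_assoc {A'' : M.Ctx l} (f : M.Mor B A) (g : M.Mor A A') (h : M.Mor A' A'') :
    (f.comp g).comp h = f.comp (g.comp h) := by
  ext1
  refine (comp_val_eq_of_mem fun i => ?_).symm
  rw [M.ax_subst_subst_tm n k m B A f.1 g.1 (h.1 i) f.2 (by rw [h.2.ft_ty i]; exact g.2)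
    _ (comp_apply_mem g h i) _ (comp_apply_mem f g)]
  exact comp_apply_mem _ _ i

def proj (T : M.Ctx (n + 1)) (h : M.ft n T = B) : M.Mor T B :=
  ⟨M.pTuple T, h ▸ hom_pTuple T⟩

lemma comp_proj_val {X : M.Ctx m} {T : M.Ctx (n + 1)} (u : M.Mor X T) (h : M.ft n T = B) :
    (u.comp (proj T h)).1 = Fin.init u.1 :=
  comp_val_eq_of_mem fun i => by
    rw [show (proj T h).1 i = M.idTuple T i.castSucc from rfl, substTm_idTuple u.2]
    exact Part.mem_some _

lemma heq_of_val_eq {B' : M.Ctx n} (hB : B = B') {x : M.Mor B A} {y : M.Mor B' A}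
    (h : x.1 = y.1) : HEq x y := by
  subst hB
  exact heq_of_eq (ext h)

lemma cast_val {B' : M.Ctx n} {A' : M.Ctx k} (hB : B = B') (hA : A = A')
    (e : M.Mor B A = M.Mor B' A') (x : M.Mor B A) : (cast e x).1 = x.1 := by
  subst hB hA
  rfl

lemma cast_proj (T : M.Ctx (n + 1)) (h : M.ft n T = B) (e : M.Mor T (M.ft n T) = M.Mor T B) :
    cast e (proj T rfl) = proj T h := by
  subst h
  rfl

end Mor

section Pullback

variable {n k l : ℕ} (A : M.Ctx (k + 1)) {B : M.Ctx n} (f : M.Mor B (M.ft k A))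

/-- The pullback `f*(A) = A[f]`. -/
def pb : M.Ctx (n + 1) :=
  (M.substTy n k B A f.1).get (by rw [M.ax_def_substTy]; exact f.2)

lemma pb_mem : pb A f ∈ M.substTy n k B A f.1 :=
  Part.get_mem _

variable {A f} in
lemma eq_pb_of_mem {T : M.Ctx (n + 1)} (h : T ∈ M.substTy n k B A f.1) : T = pb A f :=
  Part.mem_unique h (pb_mem A f)

lemma ft_pb : M.ft n (pb A f) = B :=
  M.ax_type_substTy _ _ _ _ _ _ (pb_mem A f)

lemma substTy_pb {C : M.Ctx l} (g : M.Mor C B) :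
    M.substTy l n C (pb A f) g.1 = M.substTy l k C A (g.comp f).1 :=
  M.ax_subst_subst_ty l n k C B g.1 f.1 A g.2 f.2 _ (pb_mem A f) _ (Mor.comp_apply_mem g f)

/-- Weakening the components of `f` along `p_{A[f]}` is precomposition with that projection. -/
def qTuple : Fin (k + 1) → M.Tm (n + 1) :=
  Fin.snoc ((Mor.proj (pb A f) (ft_pb A f)).comp f).1 (M.v (n + 1) 0 (by omega) (pb A f))

lemma hom_qTuple : M.Hom (n + 1) (k + 1) (pb A f) A (qTuple A f) := by
  rw [hom_succ_iff, qTuple, Fin.init_snoc, Fin.snoc_last, ← substTy_pb]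
  exact ⟨Subtype.property _, ty_v_zero_mem _⟩

def q : M.Mor (pb A f) A :=
  ⟨qTuple A f, hom_qTuple A f⟩

lemma q_val_castSucc (i : Fin k) :
    (q A f).1 i.castSucc = ((Mor.proj (pb A f) (ft_pb A f)).comp f).1 i :=
  Fin.snoc_castSucc (α := fun _ => M.Tm (n + 1)) ..

lemma q_val_last : (q A f).1 (Fin.last k) = M.v (n + 1) 0 (by omega) (pb A f) :=
  Fin.snoc_last (α := fun _ => M.Tm (n + 1)) ..

lemma q_comp_proj : (q A f).comp (Mor.proj A rfl) = (Mor.proj (pb A f) (ft_pb A f)).comp f :=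
  Mor.ext <| (Mor.comp_proj_val _ _).trans (Fin.init_snoc _ _)

lemma comp_q_val {X : M.Ctx l} (u : M.Mor X (pb A f)) (w : M.Mor X B)
    (hw : w.1 = Fin.init u.1) :
    (u.comp (q A f)).1 = Fin.snoc (w.comp f).1 (u.1 (Fin.last n)) := by
  refine Mor.comp_val_eq_of_mem fun i => ?_
  induction i using Fin.lastCases with
  | last =>
    rw [Fin.snoc_last, q_val_last, ← idTuple_last, substTm_idTuple u.2]
    exact Part.mem_some _
  | cast i =>
    obtain rfl : w = u.comp (Mor.proj (pb A f) (ft_pb A f)) :=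
      Mor.ext (hw.trans (Mor.comp_proj_val _ _).symm)
    rw [Fin.snoc_castSucc, q_val_castSucc, Mor.comp_assoc]
    exact Mor.comp_apply_mem _ _ i

lemma q_val_eq_of_mem {qf : Fin (k + 1) → M.Tm (n + 1)}
    (hcast : ∀ i : Fin k,
      qf i.castSucc ∈ M.substTm (n + 1) n (pb A f) (f.1 i) (M.pTuple (pb A f)))
    (hlast : qf (Fin.last k) = M.v (n + 1) 0 (by omega) (pb A f)) :
    (q A f).1 = qf := by
  funext i
  induction i using Fin.lastCases with
  | last => rw [q_val_last, hlast]
  | cast i =>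
    rw [q_val_castSucc]
    exact Part.mem_unique (Mor.comp_apply_mem _ _ i) (hcast i)

end Pullback

section Cartesian

variable {n k x : ℕ} {A : M.Ctx (k + 1)} {B : M.Ctx n} (f : M.Mor B (M.ft k A)) {X : M.Ctx x}
  {g : M.Mor X A} {h : M.Mor X B}

/-- `Fin.init g.1` is the tuple of `g ≫ p_A` (`Mor.comp_proj_val`). -/
def lift (hgh : (h.comp f).1 = Fin.init g.1) : M.Mor X (pb A f) :=
  ⟨Fin.snoc h.1 (g.1 (Fin.last k)), by
    rw [hom_succ_iff, Fin.init_snoc, Fin.snoc_last, substTy_pb, hgh, ft_pb]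
    exact ⟨h.2, (hom_succ_iff.mp g.2).2⟩⟩

lemma lift_comp_q (hgh : (h.comp f).1 = Fin.init g.1) : (lift f hgh).comp (q A f) = g :=
  Mor.ext <| by
    rw [comp_q_val A f _ h (Fin.init_snoc (α := fun _ => M.Tm x) _ _).symm, hgh]
    simp only [lift, Fin.snoc_last, Fin.snoc_init_self]

lemma lift_comp_proj (hgh : (h.comp f).1 = Fin.init g.1) :
    (lift f hgh).comp (Mor.proj (pb A f) (ft_pb A f)) = h :=
  Mor.ext <| (Mor.comp_proj_val _ _).trans (Fin.init_snoc _ _)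

lemma eq_lift (hgh : (h.comp f).1 = Fin.init g.1) {w : M.Mor X (pb A f)}
    (hq : w.comp (q A f) = g) (hp : w.comp (Mor.proj (pb A f) (ft_pb A f)) = h) :
    w = lift f hgh := by
  have hinit : h.1 = Fin.init w.1 := by rw [← hp, Mor.comp_proj_val]
  have hlast : w.1 (Fin.last n) = g.1 (Fin.last k) := by
    rw [← hq, comp_q_val A f w h hinit, Fin.snoc_last]
  ext1
  rw [← Fin.snoc_init_self w.1, ← hinit, hlast]
  rfl

lemma existsUnique_lift (hgh : g.comp (Mor.proj A rfl) = h.comp f) :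
    ∃! w : M.Mor X (pb A f), w.comp (q A f) = g ∧ w.comp (Mor.proj (pb A f) (ft_pb A f)) = h :=
  have hgh' : (h.comp f).1 = Fin.init g.1 := by rw [← hgh, Mor.comp_proj_val]
  ⟨lift f hgh', ⟨lift_comp_q f hgh', lift_comp_proj f hgh'⟩,
    fun _ ⟨hq, hp⟩ => eq_lift f hgh' hq hp⟩

end Cartesian

section Functoriality

variable {n k l : ℕ} (A : M.Ctx (k + 1))

lemma pb_id : pb A (Mor.id (M.ft k A)) = A :=
  (eq_pb_of_mem (Part.eq_some_iff.mp (M.ax_subst_var_ty k A))).symm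

lemma q_id : HEq (q A (Mor.id (M.ft k A))) (Mor.id A) := by
  refine Mor.heq_of_val_eq (pb_id A) (q_val_eq_of_mem A _ (fun i => ?_) ?_)
  · rw [pb_id, Mor.id, substTm_idTuple (hom_pTuple A)]
    exact Part.mem_some _
  · rw [pb_id]
    exact idTuple_last A

variable {B : M.Ctx n} (f : M.Mor B (M.ft k A)) {C : M.Ctx l} (g : M.Mor C B)
  (g' : M.Mor C (M.ft n (pb A f)))

lemma pb_comp (hg : g'.1 = g.1) : pb A (g.comp f) = pb (pb A f) g' :=
  (eq_pb_of_mem (by rw [← substTy_pb, ← hg]; exact pb_mem _ g')).symm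

lemma q_comp (hg : g'.1 = g.1) : HEq (q A (g.comp f)) ((q (pb A f) g').comp (q A f)) := by
  have hpb := pb_comp A f g g' hg
  have hw : ((Mor.proj _ (ft_pb (pb A f) g')).comp g).1 = Fin.init (q (pb A f) g').1 := by
    rw [← Mor.comp_proj_val (q (pb A f) g') rfl, q_comp_proj]
    exact Mor.comp_val_congr_right _ _ _ hg.symm
  refine Mor.heq_of_val_eq hpb (q_val_eq_of_mem A _ (fun i => ?_) ?_)
  · rw [comp_q_val _ _ _ _ hw, Fin.snoc_castSucc, Mor.comp_assoc, hpb]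
    exact Mor.comp_apply_mem (Mor.proj _ _) (g.comp f) i
  · rw [comp_q_val _ _ _ _ hw, Fin.snoc_last, q_val_last, hpb]

end Functoriality

def toCtxCat (M : SubModel.{u}) : CtxCat.{u} where
  Ob := M.Ctx
  Hom X Y := M.Mor X.2 Y.2
  id X := Mor.id X.2
  comp f g := f.comp g
  id_comp := Mor.id_comp
  comp_id := Mor.comp_id
  assoc := Mor.comp_assoc
  pt := M.star
  pt_unique := M.ctx_zero_unique
  toPt _ := ⟨Fin.elim0, fun i => i.elim0⟩
  toPt_unique _ _ := Mor.ext (funext fun i => i.elim0)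
  ft {n} A := M.ft n A
  p A := Mor.proj A rfl
  pb A _ f := pb A f
  pb_ft A _ f := ft_pb A f
  q A _ f := q A f
  square A _ f := by rw [Mor.cast_proj _ (ft_pb A f)]; exact q_comp_proj A f
  cartesian A _ f _ _ _ hgh := by rw [Mor.cast_proj _ (ft_pb A f)]; exact existsUnique_lift f hgh
  pb_id := pb_id
  q_id := q_id
  pb_comp A _ f _ g := pb_comp A f g _ (Mor.cast_val rfl (ft_pb A f).symm _ g)
  q_comp A _ f _ g := q_comp A f g _ (Mor.cast_val rfl (ft_pb A f).symm _ g)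

end SubModel

/-- For any model `M` of the theory of substitutions `𝕊`, the data `F(M)`
— objects of level `n` the contexts of length `n`, morphisms the compatible tuples of terms,
composition by substitution, identities the tuples of variables, `ft` and projections as
given, pullbacks `A[f]` by substitution and connecting maps `q(f, A)` — forms a contextual
category (so in particular the canonical square with vertices `A[f], A, B, ft_k(A)` is
Cartesian, this being part of the structure of a contextual category). -/
theorem submodel_forms_contextual_category (M : SubModel.{u}) :
    ∃ C : CtxCat.{u}, Nonempty (SubCtxCorrespondence M C) := by
  refine ⟨M.toCtxCat, ⟨
    { obEquiv := fun n => Equiv.refl (M.Ctx n)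
      ft_compat := fun _ _ => rfl
      homEquiv := fun _ _ B A => Equiv.refl (M.Mor B A)
      id_compat := fun _ _ _ => rfl
      comp_compat := fun _ _ _ _ _ _ hmem =>
        SubModel.Mor.ext (SubModel.Mor.comp_val_eq_of_mem hmem)
      p_compat := fun _ _ _ => rfl
      pb_compat := fun _ _ _ _ _ h _ hT => SubModel.eq_pb_of_mem (f := ⟨_, h⟩) hT
      q_compat := ?_ }⟩⟩
  intro n k B A a h T hT qf _ hcast hlast
  obtain rfl := SubModel.eq_pb_of_mem (f := ⟨a, h⟩) hT
  exact SubModel.Mor.ext (SubModel.q_val_eq_of_mem A ⟨a, h⟩ hcast hlast).symm
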